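/- Suppose v and w are solutions in C¹([0,T], l²(ℤ^d)) of the linear equation i v' + Δ_δ v = 0 and the nonlinear equation i w' + Δ_δ w + γ|w|^{2σ} w = 0 respectively, with ‖v(0) − w(0)‖_{l²} ≤ C₀ ε and ‖w(0)‖_{l²} ≤ C_{w,0} ε for some 0 < ε < 1. Then for any T ≤ C_T ε^{−2σ}, the difference satisfies ‖v(t) − w(t)‖_{l²} ≤ (C₀ + |γ| C_{w,0}^{2σ+1} C_T) ε for all t ∈ [0, T]. -/

import Mathlib

/-!
Summation by parts (the shift by `e` on `u` is the shift by `-e` on `v`) and the reality of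
the potential make `Δ_δ` a bounded symmetric, hence self-adjoint, operator on `l²(ℤ^d)`, so
`e^{-itΔ_δ}` is unitary. The nonlinear flow conserves `‖w‖`, because `⟪w, |w|^{2σ} w⟫` is real;
with `l² ⊂ l^∞` this bounds the forcing term: `‖γ |w|^{2σ} w‖ ≤ |γ| (C_{w,0} ε)^{2σ+1}`.
The difference `z = v - w` satisfies `z' = iΔ_δ z - iγ|w|^{2σ} w`, so `e^{-itΔ_δ} z(t)` has
derivative of norm at most this bound (Duhamel). Hence
`‖z(t)‖ ≤ ‖z(0)‖ + |γ| (C_{w,0} ε)^{2σ+1} t`, and `t ≤ C_T ε^{-2σ}` turns this into the claim.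
-/

open scoped ComplexConjugate InnerProductSpace
open Set Complex

namespace lp

variable {ι : Type*}

lemma summable_norm_sq (u : lp (fun _ : ι => ℂ) 2) : Summable fun n => ‖u n‖ ^ 2 := by
  simpa using (lp.memℓp u).summable (p := 2) (by norm_num)

lemma inner_comm_of_apply_eq_real_mul (u v : lp (fun _ : ι => ℂ) 2) (r : ι → ℝ)
    (hv : ∀ n, v n = r n * u n) : ⟪v, u⟫_ℂ = ⟪u, v⟫_ℂ := by
  rw [lp.inner_eq_tsum, lp.inner_eq_tsum]
  refine tsum_congr fun n => ?_
  simp only [hv, RCLike.inner_apply, map_mul, conj_ofReal]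
  ring

lemma norm_le_pow_succ_of_apply_eq_norm_pow_mul (u v : lp (fun _ : ι => ℂ) 2) (k : ℕ)
    (hv : ∀ n, v n = (‖u n‖ : ℂ) ^ k * u n) : ‖v‖ ≤ ‖u‖ ^ (k + 1) := by
  calc ‖v‖ ≤ ‖((‖u‖ ^ k : ℝ) : ℂ) • u‖ := lp.norm_mono two_ne_zero fun n => by
        rw [hv n, lp.coeFn_smul, Pi.smul_apply, smul_eq_mul, norm_mul, norm_mul, norm_pow,
          norm_real, norm_norm, norm_real, norm_pow, norm_norm]
        gcongr
        exact lp.norm_apply_le_norm two_ne_zero u n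
    _ = ‖u‖ ^ (k + 1) := by rw [norm_smul, norm_real, norm_pow, norm_norm, pow_succ]

variable [AddCommGroup ι]

lemma summable_norm_inner_shift (u v : lp (fun _ : ι => ℂ) 2) (a : ι) :
    Summable fun n => ‖⟪u (n + a), v n⟫_ℂ‖ := by
  refine .of_nonneg_of_le (fun _ => norm_nonneg _) (fun n => ?_)
    ((((summable_norm_sq u).comp_injective (add_left_injective a)).add
      (summable_norm_sq v)).div_const 2)
  dsimp only [Function.comp_apply]
  nlinarith [norm_inner_le_norm (𝕜 := ℂ) (u (n + a)) (v n), sq_nonneg (‖u (n + a)‖ - ‖v n‖)]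

lemma hasSum_inner_shift_left (u v : lp (fun _ : ι => ℂ) 2) (a : ι) :
    HasSum (fun n => ⟪u (n + a), v n⟫_ℂ) (∑' n, ⟪u n, v (n - a)⟫_ℂ) := by
  have h := (Equiv.subRight a).tsum_eq fun n => ⟪u (n + a), v n⟫_ℂ
  simp only [Equiv.subRight_apply, sub_add_cancel] at h
  exact h ▸ (summable_norm_inner_shift u v a).of_norm.hasSum

lemma summable_inner_shift_right (u v : lp (fun _ : ι => ℂ) 2) (a : ι) :
    Summable fun n => ⟪u n, v (n + a)⟫_ℂ :=
  ((summable_norm_inner_shift v u a).congr fun _ => norm_inner_symm _ _).of_norm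

theorem isSymmetric_of_apply_eq_laplacian_add_potential {J : Type*} [Fintype J] (e : J → ι)
    (c : ι → ℝ) (C : ℝ) (hc : ∀ n, |c n| ≤ C)
    (A : lp (fun _ : ι => ℂ) 2 →L[ℂ] lp (fun _ : ι => ℂ) 2)
    (hA : ∀ u n, A u n = (∑ j, (u (n + e j) - 2 * u n + u (n - e j))) + c n * u n) :
    (A : lp (fun _ : ι => ℂ) 2 →ₗ[ℂ] lp (fun _ : ι => ℂ) 2).IsSymmetric := by
  intro u v
  change ⟪A u, v⟫_ℂ = ⟪u, A v⟫_ℂ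
  have hPot : HasSum (fun n => c n * ⟪u n, v n⟫_ℂ) (∑' n, c n * ⟪u n, v n⟫_ℂ) := by
    refine Summable.hasSum (.of_norm_bounded ((summable_norm_inner_shift u v 0).mul_left C) ?_)
    intro n
    simpa [norm_mul] using mul_le_mul_of_nonneg_right (hc n) (norm_nonneg ⟪u n, v n⟫_ℂ)
  have hDiag : HasSum (fun n => ⟪u n, v n⟫_ℂ) (∑' n, ⟪u n, v n⟫_ℂ) := (lp.summable_inner u v).hasSum
  have hShift : ∀ a, HasSum (fun n => ⟪u n, v (n + a)⟫_ℂ) (∑' n, ⟪u n, v (n + a)⟫_ℂ) :=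
    fun a => (summable_inner_shift_right u v a).hasSum
  have hAu : HasSum (fun n => ⟪A u n, v n⟫_ℂ) _ :=
    ((hasSum_sum (s := .univ) fun j _ => ((hasSum_inner_shift_left u v (e j)).sub
      (hDiag.mul_left 2)).add (hasSum_inner_shift_left u v (-e j))).add hPot).congr_fun fun n => by
      rw [hA, inner_add_left, sum_inner]
      congr 1
      · refine Finset.sum_congr rfl fun j _ => ?_
        simp only [RCLike.inner_apply, sub_eq_add_neg, map_add, map_neg, map_mul, map_ofNat]
        ring
      · simp only [RCLike.inner_apply, map_mul, conj_ofReal]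
        ring
  have hAv : HasSum (fun n => ⟪u n, A v n⟫_ℂ) _ :=
    ((hasSum_sum (s := .univ) fun j _ => ((hShift (e j)).sub
      (hDiag.mul_left 2)).add (hShift (-e j))).add hPot).congr_fun fun n => by
      rw [hA, inner_add_right, inner_sum]
      congr 1
      · refine Finset.sum_congr rfl fun j _ => ?_
        simp only [RCLike.inner_apply, sub_eq_add_neg]
        ring
      · simp only [RCLike.inner_apply]
        ring
  rw [lp.inner_eq_tsum, lp.inner_eq_tsum, hAu.tsum_eq, hAv.tsum_eq]
  congr 1
  refine Finset.sum_congr rfl fun j _ => ?_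
  simp only [sub_eq_add_neg, neg_neg]
  ring

end lp

section Evolution

variable {H : Type*} [NormedAddCommGroup H] [InnerProductSpace ℂ H]

theorem norm_eq_of_hasDerivAt_I_smul {w F : ℝ → H} {T : ℝ}
    (hw : ∀ t ∈ Icc 0 T, HasDerivAt w (I • F t) t)
    (hF : ∀ t ∈ Icc 0 T, ⟪F t, w t⟫_ℂ = ⟪w t, F t⟫_ℂ) :
    ∀ t ∈ Icc 0 T, ‖w t‖ = ‖w 0‖ := by
  have hd : ∀ t ∈ Icc 0 T, HasDerivWithinAt (fun s => ⟪w s, w s⟫_ℂ) 0 (Icc 0 T) t := by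
    intro t ht
    refine ((hw t ht).inner ℂ (hw t ht)).hasDerivWithinAt.congr_deriv ?_
    rw [inner_smul_left, inner_smul_right, conj_I, hF t ht]
    ring
  intro t ht
  have h := norm_image_sub_le_of_norm_deriv_le_segment' hd (fun _ _ => norm_zero.le) t ht
  rw [zero_mul, norm_le_zero_iff, sub_eq_zero, inner_self_eq_norm_sq_to_K,
    inner_self_eq_norm_sq_to_K] at h
  exact (pow_left_inj₀ (norm_nonneg _) (norm_nonneg _) two_ne_zero).mp (by exact_mod_cast h)

variable [CompleteSpace H]

theorem IsSelfAdjoint.norm_exp_smul_neg_I_smul_apply {A : H →L[ℂ] H} (hA : IsSelfAdjoint A)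
    (s : ℝ) (x : H) : ‖NormedSpace.exp (s • -(I • A)) x‖ = ‖x‖ := by
  let +nondep : NormedAlgebra ℚ (H →L[ℂ] H) := .restrictScalars ℚ ℂ _
  have hmem : NormedSpace.exp (s • -(I • A)) ∈ unitary (H →L[ℂ] H) :=
    NormedSpace.exp_mem_unitary_of_mem_skewAdjoint
      (skewAdjoint.smul_mem s (neg_mem hA.I_smul_mem_skewAdjoint))
  exact ContinuousLinearMap.norm_map_of_mem_unitary hmem x

theorem norm_le_add_mul_of_hasDerivAt_I_smul_add {A : H →L[ℂ] H} (hA : IsSelfAdjoint A)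
    {z g : ℝ → H} {T K : ℝ} (hz : ∀ t ∈ Icc 0 T, HasDerivAt z (I • A (z t) + g t) t)
    (hg : ∀ t ∈ Icc 0 T, ‖g t‖ ≤ K) :
    ∀ t ∈ Icc 0 T, ‖z t‖ ≤ ‖z 0‖ + K * t := by
  have hy : ∀ s ∈ Icc 0 T, HasDerivWithinAt (fun s => NormedSpace.exp (s • -(I • A)) (z s))
      (NormedSpace.exp (s • -(I • A)) (g s)) (Icc 0 T) s := by
    intro s hs
    have hU := (ContinuousLinearMap.restrictScalarsL ℂ H H ℝ ℝ).hasFDerivAt.comp_hasDerivAt s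
      (hasDerivAt_exp_smul_const (-(I • A)) s)
    refine ((hU.clm_apply (hz s hs)).congr_deriv ?_).hasDerivWithinAt
    simp only [ContinuousLinearMap.coe_restrict_scalarsL', ContinuousLinearMap.coe_restrictScalars',
      smul_neg, mul_neg, ContinuousLinearMap.restrictScalars_neg, neg_apply, mul_apply_eq_comp,
      Function.comp_apply, map_add, map_smul, smul_apply, neg_add_cancel_left]
  intro t ht
  have h := norm_image_sub_le_of_norm_deriv_le_segment' hy (fun s hs =>
    (hA.norm_exp_smul_neg_I_smul_apply s (g s)).trans_le (hg s (Ico_subset_Icc_self hs))) t ht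
  rw [zero_smul, NormedSpace.exp_zero, one_apply_eq_self, sub_zero] at h
  calc ‖z t‖ = ‖NormedSpace.exp (t • -(I • A)) (z t)‖ :=
        (hA.norm_exp_smul_neg_I_smul_apply t (z t)).symm
    _ ≤ ‖z 0‖ + K * t := by linarith [norm_le_insert' (NormedSpace.exp (t • -(I • A)) (z t)) (z 0)]

end Evolution

lemma mul_pow_succ_mul_rpow_neg (C : ℝ) {ε : ℝ} (hε : 0 < ε) (k : ℕ) :
    (C * ε) ^ (k + 1) * ε ^ (-(k : ℝ)) = C ^ (k + 1) * ε := by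
  rw [mul_pow, mul_assoc, ← Real.rpow_natCast ε, ← Real.rpow_add hε]
  norm_num

theorem stmt5_general (d σ : ℕ) (γ V0 T ε C₀ Cw0 CT : ℝ)
    (hε : 0 < ε) (hTle : T ≤ CT * ε ^ (-(2 * (σ : ℝ))))
    (Aop : lp (fun _ : Fin d → ℤ => ℂ) 2 →L[ℂ] lp (fun _ : Fin d → ℤ => ℂ) 2)
    (hA : ∀ u : lp (fun _ : Fin d → ℤ => ℂ) 2, ∀ n : Fin d → ℤ,
      (Aop u) n = (∑ j : Fin d,
        (u (n + Pi.single j 1) - 2 * u n + u (n - Pi.single j 1))) +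
        (if n = 0 then (V0 : ℂ) else 0) * u n)
    (N : lp (fun _ : Fin d → ℤ => ℂ) 2 → lp (fun _ : Fin d → ℤ => ℂ) 2)
    (hN : ∀ u : lp (fun _ : Fin d → ℤ => ℂ) 2, ∀ n : Fin d → ℤ,
      (N u) n = (‖u n‖ : ℂ) ^ (2 * σ) * u n)
    (v w : ℝ → lp (fun _ : Fin d → ℤ => ℂ) 2)
    (hv : ∀ t ∈ Set.Icc (0 : ℝ) T, HasDerivAt v (Complex.I • Aop (v t)) t)
    (hw : ∀ t ∈ Set.Icc (0 : ℝ) T,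
      HasDerivAt w (Complex.I • (Aop (w t) + (γ : ℂ) • N (w t))) t)
    (h0 : ‖v 0 - w 0‖ ≤ C₀ * ε) (hw0 : ‖w 0‖ ≤ Cw0 * ε) :
    ∀ t ∈ Set.Icc (0 : ℝ) T,
      ‖v t - w t‖ ≤ (C₀ + |γ| * Cw0 ^ (2 * σ + 1) * CT) * ε := by
  have hAop : IsSelfAdjoint Aop := ContinuousLinearMap.isSelfAdjoint_iff_isSymmetric.mpr <|
    lp.isSymmetric_of_apply_eq_laplacian_add_potential (fun j => Pi.single j 1)
      (fun n => if n = 0 then V0 else 0) |V0| (fun n => by split_ifs <;> simp) Aop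
      (fun u n => by rw [hA, apply_ite ((↑) : ℝ → ℂ), ofReal_zero])
  have hw_norm : ∀ t ∈ Icc 0 T, ‖w t‖ = ‖w 0‖ := norm_eq_of_hasDerivAt_I_smul hw fun t _ => by
    rw [inner_add_left, inner_add_right, inner_smul_left, inner_smul_right, conj_ofReal,
      lp.inner_comm_of_apply_eq_real_mul (w t) (N (w t)) (fun n => ‖w t n‖ ^ (2 * σ))
        (by simpa using hN (w t))]
    exact congrArg (· + _) (hAop.isSymmetric (w t) (w t))
  have hNw : ∀ t ∈ Icc 0 T, ‖-(I * γ) • N (w t)‖ ≤ |γ| * (Cw0 * ε) ^ (2 * σ + 1) := by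
    intro t ht
    rw [norm_smul, norm_neg, norm_mul, norm_I, one_mul, norm_real, Real.norm_eq_abs]
    gcongr
    exact (lp.norm_le_pow_succ_of_apply_eq_norm_pow_mul _ _ _ (hN (w t))).trans
      (pow_le_pow_left₀ (norm_nonneg _) (hw_norm t ht ▸ hw0) _)
  have hz := norm_le_add_mul_of_hasDerivAt_I_smul_add hAop (z := v - w) (fun t ht =>
    ((hv t ht).sub (hw t ht)).congr_deriv (by
      rw [Pi.sub_apply, map_sub, smul_sub, smul_add, smul_smul, neg_smul]; abel)) hNw
  intro t ht
  have hCw0ε : 0 ≤ Cw0 * ε := (norm_nonneg _).trans hw0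
  calc ‖v t - w t‖ ≤ C₀ * ε + |γ| * (Cw0 * ε) ^ (2 * σ + 1) * (CT * ε ^ (-(2 * (σ : ℝ)))) := by
        refine (hz t ht).trans ?_
        gcongr
        exacts [h0, ht.2.trans hTle]
    _ = (C₀ + |γ| * Cw0 ^ (2 * σ + 1) * CT) * ε := by
        have h := mul_pow_succ_mul_rpow_neg Cw0 hε (2 * σ)
        push_cast at h
        linear_combination |γ| * CT * h

/-- If `v`, `w` solve the linear equation `i v' + Δ_δ v = 0` and the nonlinear
equation `i w' + Δ_δ w + γ |w|^{2σ} w = 0` in `C¹([0,T], l²)`, with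
`‖v(0) - w(0)‖ ≤ C₀ ε` and `‖w(0)‖ ≤ C_{w,0} ε`, `0 < ε < 1`, then for any
`T ≤ C_T ε^{-2σ}` one has `‖v(t) - w(t)‖ ≤ (C₀ + |γ| C_{w,0}^{2σ+1} C_T) ε`
on `[0, T]`. -/
theorem stmt5 (d σ : ℕ) (hσ : 0 < σ) (γ V0 T ε C₀ Cw0 CT : ℝ)
    (hε : 0 < ε) (hε1 : ε < 1) (hC₀ : 0 < C₀) (hCw0 : 0 < Cw0) (hCT : 0 < CT)
    (hT : 0 < T) (hTle : T ≤ CT * ε ^ (-(2 * (σ : ℝ))))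
    (Aop : lp (fun _ : Fin d → ℤ => ℂ) 2 →L[ℂ] lp (fun _ : Fin d → ℤ => ℂ) 2)
    (hA : ∀ u : lp (fun _ : Fin d → ℤ => ℂ) 2, ∀ n : Fin d → ℤ,
      (Aop u) n = (∑ j : Fin d,
        (u (n + Pi.single j 1) - 2 * u n + u (n - Pi.single j 1))) +
        (if n = 0 then (V0 : ℂ) else 0) * u n)
    (N : lp (fun _ : Fin d → ℤ => ℂ) 2 → lp (fun _ : Fin d → ℤ => ℂ) 2)
    (hN : ∀ u : lp (fun _ : Fin d → ℤ => ℂ) 2, ∀ n : Fin d → ℤ,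
      (N u) n = (‖u n‖ : ℂ) ^ (2 * σ) * u n)
    (v w : ℝ → lp (fun _ : Fin d → ℤ => ℂ) 2)
    (hv : ∀ t ∈ Set.Icc (0 : ℝ) T, HasDerivAt v (Complex.I • Aop (v t)) t)
    (hw : ∀ t ∈ Set.Icc (0 : ℝ) T,
      HasDerivAt w (Complex.I • (Aop (w t) + (γ : ℂ) • N (w t))) t)
    (h0 : ‖v 0 - w 0‖ ≤ C₀ * ε) (hw0 : ‖w 0‖ ≤ Cw0 * ε) :
    ∀ t ∈ Set.Icc (0 : ℝ) T,
      ‖v t - w t‖ ≤ (C₀ + |γ| * Cw0 ^ (2 * σ + 1) * CT) * ε :=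
  stmt5_general d σ γ V0 T ε C₀ Cw0 CT hε hTle Aop hA N hN v w hv hw h0 hw0
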